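/- arXiv:1507.03411 — 5 statements merged into one kernel-verified Lean document; each statement's English description precedes it below -/
import Mathlib

section
/- Let P(λ₁,…,λ_m) be a polynomial of total degree 2m in m variables that is at most quadratic in each individual variable. If d > m, then the coefficient of λ^d in P(λ,…,λ) equals the sum over r from 1 to ⌊d/2⌋ of (−1)^{r+1} 2^{−r} times the sum over all index sets i₁<…<i_r of the coefficient of λ^{d−2r} in (∂^{2r}P/∂λ_{i₁}²⋯∂λ_{i_r}²)(λ,…,λ). -/
/-- Specialize all variables of a multivariable polynomial to a single variable `λ`. -/
noncomputable def diagSpec {m : ℕ} (P : MvPolynomial (Fin m) ℝ) : Polynomial ℝ :=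
  MvPolynomial.aeval (fun _ : Fin m => Polynomial.X) P

/-- Apply the second partial derivative `∂²/∂λᵢ²` for each `i` in the finset `s`. -/
noncomputable def secondDerivs {m : ℕ} (s : Finset (Fin m)) (P : MvPolynomial (Fin m) ℝ) :
    MvPolynomial (Fin m) ℝ :=
  s.toList.foldr (fun i Q => MvPolynomial.pderiv i (MvPolynomial.pderiv i Q)) P

/-!
Both sides are linear in `P`, so it suffices to treat a monomial `c λ^α` with all `αᵢ ≤ 2`.
Applying `∂²/∂λᵢ²` for all `i ∈ s` kills it unless `αᵢ = 2` on `s`, and otherwise multiplies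
it by `2^|s|` and lowers its total degree by `2|s|`. So with `A = {i | αᵢ = 2}` the right-hand
side is `[|α| = d] c ∑_{r ≥ 1} (-1)^(r+1) C(|A|, r)`, and the alternating sum is `1` because
`|A| ≥ |α| - m = d - m > 0` (while `2|A| ≤ |α| = d` keeps every nonzero term in the range).
-/

open MvPolynomial Finset

section General

variable {R σ : Type*} [CommSemiring R]

lemma pderiv_pderiv_monomial (i : σ) (α : σ →₀ ℕ) (c : R) :
    pderiv i (pderiv i (monomial α c)) =
      monomial (α - Finsupp.single i 2) (c * (α i).descFactorial 2) := by
  rw [pderiv_monomial, pderiv_monomial, tsub_tsub, ← Finsupp.single_add, mul_assoc]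
  congr 2
  simp [Nat.descFactorial_succ, mul_comm]

lemma foldr_pderiv_pderiv_monomial [DecidableEq σ] {l : List σ} (hl : l.Nodup)
    (α : σ →₀ ℕ) (c : R) :
    l.foldr (fun i Q => pderiv i (pderiv i Q)) (monomial α c) =
      monomial (α - ∑ i ∈ l.toFinset, Finsupp.single i 2)
        (c * ∏ i ∈ l.toFinset, ((α i).descFactorial 2 : R)) := by
  induction l with
  | nil => simp
  | cons i t ih =>
    obtain ⟨hit, ht⟩ := List.nodup_cons.1 hl
    have hit' : i ∉ t.toFinset := by simpa using hit
    have hαi : (α - ∑ j ∈ t.toFinset, Finsupp.single j 2 : σ →₀ ℕ) i = α i := by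
      simp [Finsupp.single_apply, hit']
    rw [List.foldr_cons, ih ht, pderiv_pderiv_monomial, hαi, List.toFinset_cons,
      sum_insert hit', prod_insert hit', tsub_tsub, add_comm (∑ j ∈ _, _), mul_assoc,
      mul_comm (∏ j ∈ _, _)]

lemma coeff_aeval_X_monomial (α : σ →₀ ℕ) (c : R) (n : ℕ) :
    (aeval (fun _ => Polynomial.X) (monomial α c) : Polynomial R).coeff n =
      if n = α.degree then c else 0 := by
  rw [aeval_monomial, Finsupp.prod, prod_pow_eq_pow_sum, Polynomial.algebraMap_eq,
    Polynomial.coeff_C_mul_X_pow, Finsupp.degree]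
  rfl

lemma degree_tsub_sum_single_two_add {s : Finset σ} {α : σ →₀ ℕ} (hs : ∀ i ∈ s, α i = 2) :
    (α - ∑ i ∈ s, Finsupp.single i 2).degree + 2 * #s = α.degree := by
  classical
  have hle : ∑ i ∈ s, Finsupp.single i 2 ≤ α := fun j => by
    by_cases hj : j ∈ s <;> simp [Finsupp.finsetSum_apply, Finsupp.single_apply, hj, hs]
  conv_rhs => rw [← tsub_add_cancel_of_le hle]
  simp [map_sum, Finsupp.degree_single, mul_comm]

lemma two_mul_card_le_degree [Fintype σ] (α : σ →₀ ℕ) : 2 * #{i | α i = 2} ≤ α.degree := by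
  rw [card_filter, mul_sum, Finsupp.degree_eq_sum]
  exact sum_le_sum fun i _ => by split_ifs <;> omega

lemma degree_le_card_add_card [Fintype σ] {α : σ →₀ ℕ} (hα : ∀ i, α i ≤ 2) :
    α.degree ≤ Fintype.card σ + #{i | α i = 2} := by
  rw [card_filter, Finsupp.degree_eq_sum, ← card_univ, card_eq_sum_ones, ← sum_add_distrib]
  exact sum_le_sum fun i _ => by have := hα i; split_ifs <;> omega

end General

lemma Nat.descFactorial_two_of_le_two {n : ℕ} (hn : n ≤ 2) :
    n.descFactorial 2 = if n = 2 then 2 else 0 := by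
  interval_cases n <;> rfl

lemma sum_Icc_neg_one_pow_succ_mul_choose {R : Type*} [CommRing R] {a N : ℕ} (ha : a ≠ 0)
    (haN : a ≤ N) : ∑ r ∈ Icc 1 N, (-1 : R) ^ (r + 1) * a.choose r = 1 := by
  obtain ⟨n, rfl⟩ := Nat.exists_eq_succ_of_ne_zero ha
  have h := Int.alternating_sum_range_choose_eq_choose (n := n) (m := N)
  rw [Nat.choose_eq_zero_of_lt (by omega), Nat.cast_zero, mul_zero, sum_range_succ'] at h
  have hZ : ∑ r ∈ Icc 1 N, (-1 : ℤ) ^ (r + 1) * (n + 1).choose r = 1 := by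
    rw [← Ico_add_one_right_eq_Icc, sum_Ico_eq_sum_range, Nat.add_sub_cancel]
    simp only [add_comm 1, pow_succ, pow_zero, Nat.choose_zero_right, Nat.cast_one, one_mul,
      mul_neg_one, neg_neg, neg_mul, sum_neg_distrib] at h ⊢
    linarith
  exact_mod_cast congrArg (Int.cast : ℤ → R) hZ

section Diagonal

variable {m : ℕ}

lemma diagSpec_sum {ι : Type*} (t : Finset ι) (f : ι → MvPolynomial (Fin m) ℝ) :
    diagSpec (∑ x ∈ t, f x) = ∑ x ∈ t, diagSpec (f x) :=
  map_sum _ _ _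

lemma secondDerivs_sum (s : Finset (Fin m)) {ι : Type*} (t : Finset ι)
    (f : ι → MvPolynomial (Fin m) ℝ) :
    secondDerivs s (∑ x ∈ t, f x) = ∑ x ∈ t, secondDerivs s (f x) := by
  unfold secondDerivs
  induction s.toList with
  | nil => rfl
  | cons i l ih => simp only [List.foldr_cons, ih, map_sum]

lemma coeff_diagSpec_secondDerivs_monomial (s : Finset (Fin m)) {α : Fin m →₀ ℕ}
    (hα : ∀ i, α i ≤ 2) (c : ℝ) (n : ℕ) :
    (diagSpec (secondDerivs s (monomial α c))).coeff n =
      if (∀ i ∈ s, α i = 2) ∧ n + 2 * #s = α.degree then 2 ^ #s * c else 0 := by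
  have hprod : ∏ i ∈ s, ((α i).descFactorial 2 : ℝ) = if ∀ i ∈ s, α i = 2 then 2 ^ #s else 0 := by
    simp only [Nat.descFactorial_two_of_le_two (hα _), Nat.cast_ite, Nat.cast_ofNat,
      Nat.cast_zero, prod_ite_zero, prod_const]
  rw [secondDerivs, foldr_pderiv_pderiv_monomial s.nodup_toList, toList_toFinset, diagSpec,
    coeff_aeval_X_monomial, hprod]
  by_cases hs : ∀ i ∈ s, α i = 2
  · simp only [if_pos hs, and_iff_right hs, ← degree_tsub_sum_single_two_add hs,
      Nat.add_right_cancel_iff, mul_comm]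
  · simp [hs]

lemma coeff_diagSpec_monomial_eq_alternating_sum {d : ℕ} (hd : m < d) {α : Fin m →₀ ℕ}
    (hα : ∀ i, α i ≤ 2) (c : ℝ) :
    (diagSpec (monomial α c)).coeff d =
      ∑ r ∈ Icc 1 (d / 2), (-1 : ℝ) ^ (r + 1) * ((2 : ℝ)⁻¹) ^ r *
        ∑ s ∈ (univ : Finset (Fin m)).powersetCard r,
          (diagSpec (secondDerivs s (monomial α c))).coeff (d - 2 * r) := by
  set A : Finset (Fin m) := {i | α i = 2}
  have hinner : ∀ r ∈ Icc 1 (d / 2), ∑ s ∈ (univ : Finset (Fin m)).powersetCard r,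
      (diagSpec (secondDerivs s (monomial α c))).coeff (d - 2 * r) =
        (#A).choose r * (if d = α.degree then 2 ^ r * c else 0) := by
    intro r hr
    have h2r : 2 * r ≤ d := by rw [mem_Icc] at hr; omega
    have hA : (univ.powersetCard r).filter (· ⊆ A) = A.powersetCard r := by
      ext s; simp only [mem_filter, mem_powersetCard, subset_univ, true_and]; tauto
    calc _ = ∑ s ∈ univ.powersetCard r, if s ⊆ A then (if d = α.degree then 2 ^ r * c else 0)
          else 0 := by
          refine sum_congr rfl fun s hs => ?_
          rw [coeff_diagSpec_secondDerivs_monomial s hα, (mem_powersetCard.1 hs).2,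
            Nat.sub_add_cancel h2r]
          simp [A, subset_iff, ite_and]
      _ = _ := by rw [← sum_filter, sum_const, hA, card_powersetCard, nsmul_eq_mul]
  rw [sum_congr rfl fun r hr => by rw [hinner r hr], diagSpec, coeff_aeval_X_monomial]
  split_ifs with hdeg
  · have hA : #A ≠ 0 ∧ #A ≤ d / 2 := by
      have h₁ : 2 * #A ≤ α.degree := two_mul_card_le_degree α
      have h₂ : α.degree ≤ m + #A := by simpa using degree_le_card_add_card hα
      omega
    calc c = (∑ r ∈ Icc 1 (d / 2), (-1 : ℝ) ^ (r + 1) * (#A).choose r) * c := by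
          rw [sum_Icc_neg_one_pow_succ_mul_choose hA.1 hA.2, one_mul]
      _ = _ := by
          rw [sum_mul]
          refine sum_congr rfl fun r _ => ?_
          rw [inv_pow]
          field_simp
  · simp

end Diagonal

theorem stmt0_general (m d : ℕ) (P : MvPolynomial (Fin m) ℝ)
    (hquad : ∀ i : Fin m, P.degreeOf i ≤ 2)
    (hd : m < d) :
    (diagSpec P).coeff d =
      ∑ r ∈ Finset.Icc 1 (d / 2), (-1 : ℝ) ^ (r + 1) * ((2 : ℝ)⁻¹) ^ r *
        ∑ s ∈ (Finset.univ : Finset (Fin m)).powersetCard r,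
          (diagSpec (secondDerivs s P)).coeff (d - 2 * r) := by
  have hα : ∀ α ∈ P.support, ∀ i, α i ≤ 2 := fun α hα i =>
    (monomial_le_degreeOf i hα).trans (hquad i)
  conv_lhs => rw [P.as_sum, diagSpec_sum, Polynomial.finsetSum_coeff]
  conv_rhs => rw [P.as_sum]
  rw [sum_congr rfl fun α hα' => coeff_diagSpec_monomial_eq_alternating_sum hd (hα α hα') _]
  simp only [secondDerivs_sum, diagSpec_sum, Polynomial.finsetSum_coeff, mul_sum]
  rw [sum_comm]
  exact sum_congr rfl fun r _ => sum_comm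

/-- if `P` has total degree at most `2m`, is at most quadratic in each variable,
and `d > m`, then `[λ^d] P(λ,…,λ)` equals the stated alternating sum of coefficients of
diagonal specializations of iterated second derivatives. -/
theorem stmt0 (m d : ℕ) (P : MvPolynomial (Fin m) ℝ)
    (hdeg : P.totalDegree ≤ 2 * m)
    (hquad : ∀ i : Fin m, P.degreeOf i ≤ 2)
    (hd : m < d) :
    (diagSpec P).coeff d =
      ∑ r ∈ Finset.Icc 1 (d / 2), (-1 : ℝ) ^ (r + 1) * ((2 : ℝ)⁻¹) ^ r *
        ∑ s ∈ (Finset.univ : Finset (Fin m)).powersetCard r,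
          (diagSpec (secondDerivs s P)).coeff (d - 2 * r) :=
  stmt0_general m d P hquad hd
end

section
/- For a matrix M whose rows and columns are indexed so that for each edge e the two orientations of e label adjacent indices, deleting the two rows and columns corresponding to an edge e_i from the characteristic-type multivariable polynomial P_G(λ₁,…,λ_m) := det(diag(λ₁,λ₁,…,λ_m,λ_m) − T_G) satisfies ∂²P_G/∂λ_i² = 2·P_{G−e_i}(λ₁,…,λ̂_i,…,λ_m). -/
/-- The reversal of an oriented edge. -/
def obar {m : ℕ} (x : Fin m × Bool) : Fin m × Bool := (x.1, !x.2)

/-- Origin of an oriented edge of the multigraph with edge endpoint maps `src`, `tgt`. -/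
def orig {m : ℕ} {V : Type} (src tgt : Fin m → V) (x : Fin m × Bool) : V :=
  if x.2 then src x.1 else tgt x.1

/-- Terminus of an oriented edge. -/
def termv {m : ℕ} {V : Type} (src tgt : Fin m → V) (x : Fin m × Bool) : V :=
  if x.2 then tgt x.1 else src x.1

/-- The Bass–Hashimoto edge adjacency matrix of the multigraph. -/
def bh {m : ℕ} {V : Type} [DecidableEq V] (R : Type) [Ring R] (src tgt : Fin m → V) :
    Matrix (Fin m × Bool) (Fin m × Bool) R :=
  Matrix.of fun x y => if termv src tgt x = orig src tgt y ∧ y ≠ obar x then 1 else 0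

/-- The multivariable characteristic-type polynomial
`P_G(λ₁,…,λ_m) = det(diag(λ₁,λ₁,…,λ_m,λ_m) − T_G)`, each variable being attached to the
two orientations of one edge. -/
noncomputable def PG {m : ℕ} {V : Type} [DecidableEq V] (src tgt : Fin m → V) :
    MvPolynomial (Fin m) ℝ :=
  Matrix.det (Matrix.of fun x y : Fin m × Bool =>
    (if x = y then MvPolynomial.X x.1 else 0) - bh (MvPolynomial (Fin m) ℝ) src tgt x y)

/-- The analogous polynomial for `G − eᵢ`: delete the two rows and columns of the two
orientations of `eᵢ`. -/
noncomputable def PGdel {m : ℕ} {V : Type} [DecidableEq V] (src tgt : Fin m → V) (i : Fin m) :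
    MvPolynomial (Fin m) ℝ :=
  Matrix.det (Matrix.of fun a b : {x : Fin m × Bool // x.1 ≠ i} =>
    (if a = b then MvPolynomial.X a.1.1 else 0) -
      bh (MvPolynomial (Fin m) ℝ) src tgt a.1 b.1)

open Matrix MvPolynomial

section Aux
variable {n : Type*} [Fintype n] [DecidableEq n]

omit [Fintype n] in
lemma pderiv_prod_zero' {σ : Type*} [DecidableEq σ] (i : σ) (s : Finset n)
    (f : n → MvPolynomial σ ℝ) (h : ∀ j ∈ s, pderiv i (f j) = 0) :
    pderiv i (∏ j ∈ s, f j) = 0 := by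
  classical
  induction s using Finset.induction_on with
  | empty => simp
  | @insert j s hj ih =>
    rw [Finset.prod_insert hj, pderiv_mul, h j (Finset.mem_insert_self j s),
      ih fun k hk => h k (Finset.mem_insert_of_mem hk)]
    ring

lemma pderiv_det_zero' {σ : Type*} [DecidableEq σ] (i : σ)
    (M : Matrix n n (MvPolynomial σ ℝ)) (h : ∀ a b, pderiv i (M a b) = 0) :
    pderiv i M.det = 0 := by
  rw [Matrix.det_apply', map_sum]
  refine Finset.sum_eq_zero fun σ' _ => ?_
  have h1 : (pderiv i) ((Equiv.Perm.sign σ' : ℤ) : MvPolynomial σ ℝ) = 0 :=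
    Derivation.map_intCast _ _
  rw [pderiv_mul, h1, pderiv_prod_zero' i _ _ fun j _ => h _ _]
  ring

lemma det_two_row_expand' {R : Type*} [CommRing R] (M : Matrix n n R) {a b : n} (hab : a ≠ b)
    (p : R) (ra rb ca cb : n → R) (hA : M a = p • ra + ca) (hB : M b = p • rb + cb) :
    M.det = p * p * ((M.updateRow a ra).updateRow b rb).det
      + p * ((M.updateRow a ra).updateRow b cb).det
      + p * ((M.updateRow a ca).updateRow b rb).det
      + ((M.updateRow a ca).updateRow b cb).det := by
  have h1 : M.det = p * (M.updateRow a ra).det + (M.updateRow a ca).det := by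
    conv_lhs => rw [← Matrix.updateRow_eq_self M a, hA, Matrix.det_updateRow_add,
      Matrix.det_updateRow_smul]
  have expandb : ∀ u : n → R,
      (M.updateRow a u).det = p * ((M.updateRow a u).updateRow b rb).det
        + ((M.updateRow a u).updateRow b cb).det := by
    intro u
    conv_lhs => rw [← Matrix.updateRow_eq_self (M.updateRow a u) b,
      Matrix.updateRow_ne (Ne.symm hab), hB, Matrix.det_updateRow_add, Matrix.det_updateRow_smul]
  rw [h1, expandb ra, expandb ca]
  ring

end Aux

/-- `∂²P_G/∂λᵢ² = 2 · P_{G−eᵢ}`. -/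
theorem stmt2 (m : ℕ) (V : Type) [Fintype V] [DecidableEq V]
    (src tgt : Fin m → V) (i : Fin m) :
    MvPolynomial.pderiv i (MvPolynomial.pderiv i (PG src tgt)) = 2 * PGdel src tgt i := by
  classical
  set M : Matrix (Fin m × Bool) (Fin m × Bool) (MvPolynomial (Fin m) ℝ) :=
    Matrix.of fun x y => (if x = y then MvPolynomial.X x.1 else 0) - bh (MvPolynomial (Fin m) ℝ) src tgt x y with hM
  set a : Fin m × Bool := (i, true) with ha
  set b : Fin m × Bool := (i, false) with hb
  have hab : a ≠ b := by simp [ha, hb]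
  set ra : (Fin m × Bool) → (MvPolynomial (Fin m) ℝ) := Pi.single a 1 with hra
  set rb : (Fin m × Bool) → (MvPolynomial (Fin m) ℝ) := Pi.single b 1 with hrb
  set ca : (Fin m × Bool) → (MvPolynomial (Fin m) ℝ) := fun y => -bh (MvPolynomial (Fin m) ℝ) src tgt a y with hca
  set cb : (Fin m × Bool) → (MvPolynomial (Fin m) ℝ) := fun y => -bh (MvPolynomial (Fin m) ℝ) src tgt b y with hcb
  have hA : M a = (MvPolynomial.X i : (MvPolynomial (Fin m) ℝ)) • ra + ca := by
    funext y
    simp only [hM, Matrix.of_apply, hra, hca, Pi.add_apply, Pi.smul_apply, Pi.single_apply,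
      smul_eq_mul, mul_ite, mul_one, mul_zero, sub_eq_add_neg, ha]
    congr 1
    simp [eq_comm]
  have hB : M b = (MvPolynomial.X i : (MvPolynomial (Fin m) ℝ)) • rb + cb := by
    funext y
    simp only [hM, Matrix.of_apply, hrb, hcb, Pi.add_apply, Pi.smul_apply, Pi.single_apply,
      smul_eq_mul, mul_ite, mul_one, mul_zero, sub_eq_add_neg, hb]
    congr 1
    simp [eq_comm]
  -- rows not equal to a, b have first coordinate ≠ i
  have hrow : ∀ x : Fin m × Bool, x ≠ a → x ≠ b → x.1 ≠ i := by
    rintro ⟨x1, x2⟩ h1 h2 rfl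
    cases x2
    · exact h2 rfl
    · exact h1 rfl
  -- derivative-vanishing for all four minors
  have hder : ∀ u v : (Fin m × Bool) → (MvPolynomial (Fin m) ℝ), (∀ y, pderiv i (u y) = 0) → (∀ y, pderiv i (v y) = 0) →
      pderiv i ((M.updateRow a u).updateRow b v).det = 0 := by
    intro u v hu hv
    refine pderiv_det_zero' i _ fun x y => ?_
    rcases eq_or_ne x b with rfl | hxb
    · rw [Matrix.updateRow_self]; exact hv y
    rw [Matrix.updateRow_ne hxb]
    rcases eq_or_ne x a with rfl | hxa
    · rw [Matrix.updateRow_self]; exact hu y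
    rw [Matrix.updateRow_ne hxa]
    have hx1 : x.1 ≠ i := hrow x hxa hxb
    simp only [hM, Matrix.of_apply, map_sub]
    have h1 : pderiv i (if x = y then (MvPolynomial.X x.1 : (MvPolynomial (Fin m) ℝ)) else 0) = 0 := by
      split
      · rw [pderiv_X]; simp [Pi.single_apply, Ne.symm hx1]
      · simp
    have h2 : pderiv i (bh (MvPolynomial (Fin m) ℝ) src tgt x y) = 0 := by
      simp only [bh, Matrix.of_apply]
      split <;> simp
    rw [h1, h2, sub_zero]
  have hconst : ∀ y, pderiv i (ra y) = 0 := by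
    intro y; simp only [hra, Pi.single_apply]; split <;> simp
  have hconst' : ∀ y, pderiv i (rb y) = 0 := by
    intro y; simp only [hrb, Pi.single_apply]; split <;> simp
  have hconstc : ∀ y, pderiv i (ca y) = 0 := by
    intro y; simp only [hca, bh, Matrix.of_apply]; split <;> simp
  have hconstc' : ∀ y, pderiv i (cb y) = 0 := by
    intro y; simp only [hcb, bh, Matrix.of_apply]; split <;> simp
  set K11 := ((M.updateRow a ra).updateRow b rb).det with hK11
  set K10 := ((M.updateRow a ra).updateRow b cb).det with hK10
  set K01 := ((M.updateRow a ca).updateRow b rb).det with hK01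
  set K00 := ((M.updateRow a ca).updateRow b cb).det with hK00
  have hdet : M.det = MvPolynomial.X i * MvPolynomial.X i * K11
      + MvPolynomial.X i * K10 + MvPolynomial.X i * K01 + K00 :=
    det_two_row_expand' M hab _ ra rb ca cb hA hB
  have d11 : pderiv i K11 = 0 := hder ra rb hconst hconst'
  have d10 : pderiv i K10 = 0 := hder ra cb hconst hconstc'
  have d01 : pderiv i K01 = 0 := hder ca rb hconstc hconst'
  have d00 : pderiv i K00 = 0 := hder ca cb hconstc hconstc'
  have hPG : PG src tgt = M.det := rfl
  have e1 : pderiv i (PG src tgt) = MvPolynomial.X i * K11 + MvPolynomial.X i * K11 + K10 + K01 := by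
    rw [hPG, hdet]
    simp only [map_add, pderiv_mul, d11, d10, d01, d00, pderiv_X_self]
    ring
  have e2 : pderiv i (pderiv i (PG src tgt)) = 2 * K11 := by
    rw [e1]
    simp only [map_add, pderiv_mul, d11, d10, d01, pderiv_X_self]
    ring
  rw [e2]
  congr 1
  -- K11 = PGdel
  set M' := (M.updateRow a ra).updateRow b rb with hM'
  let e := Equiv.sumCompl (fun x : Fin m × Bool => x.1 = i)
  have hsub : M'.submatrix e e = Matrix.fromBlocks 1 0
      (Matrix.of fun (x : {x : Fin m × Bool // x.1 ≠ i}) (y : {x : Fin m × Bool // x.1 = i}) =>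
        M' x.1 y.1)
      (Matrix.of fun a b : {x : Fin m × Bool // x.1 ≠ i} =>
        (if a = b then MvPolynomial.X a.1.1 else 0) - bh (MvPolynomial (Fin m) ℝ) src tgt a.1 b.1) := by
    ext x y
    cases x with
    | inl x =>
      obtain ⟨⟨x1, x2⟩, hx⟩ := x
      simp only at hx
      subst hx
      have hxrow : M' (x1, x2) = if x2 then ra else rb := by
        cases x2
        · rw [hM', Matrix.updateRow_self]; rfl
        · rw [hM', Matrix.updateRow_ne hab, Matrix.updateRow_self]; rfl
      cases y with
      | inl y =>
        obtain ⟨⟨y1, y2⟩, hy⟩ := y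
        simp only at hy
        subst hy
        simp only [Matrix.submatrix_apply, Matrix.fromBlocks_apply₁₁]
        rw [show e (Sum.inl ⟨(y1, y2), rfl⟩) = (y1, y2) from rfl,
          show e (Sum.inl ⟨(y1, x2), rfl⟩) = (y1, x2) from rfl]
        rw [hxrow]
        cases x2 <;> cases y2 <;>
          simp [hra, hrb, ha, hb, Pi.single_apply, Matrix.one_apply, Subtype.ext_iff,
            Prod.ext_iff]
      | inr y =>
        simp only [Matrix.submatrix_apply, Matrix.fromBlocks_apply₁₂, Matrix.zero_apply]
        rw [show e (Sum.inl ⟨(x1, x2), rfl⟩) = (x1, x2) from rfl,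
          show e (Sum.inr y) = y.1 from rfl]
        rw [hxrow]
        have hne1 : y.1 ≠ a := fun h => y.2 (congrArg Prod.fst h)
        have hne2 : y.1 ≠ b := fun h => y.2 (congrArg Prod.fst h)
        cases x2 <;> simp [hra, hrb, Pi.single_apply, hne1, hne2]
    | inr x =>
      cases y with
      | inl y =>
        simp only [Matrix.submatrix_apply, Matrix.fromBlocks_apply₂₁, Matrix.of_apply]
        rfl
      | inr y =>
        simp only [Matrix.submatrix_apply, Matrix.fromBlocks_apply₂₂, Matrix.of_apply]
        rw [show e (Sum.inr x) = x.1 from rfl, show e (Sum.inr y) = y.1 from rfl]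
        have hxa : x.1 ≠ a := fun h => x.2 (by rw [h])
        have hxb : x.1 ≠ b := fun h => x.2 (by rw [h])
        rw [hM', Matrix.updateRow_ne hxb, Matrix.updateRow_ne hxa]
        simp only [hM, Matrix.of_apply]
        rcases eq_or_ne x y with rfl | hxy
        · simp
        · rw [if_neg (fun h => hxy (Subtype.ext h)), if_neg hxy]
  have : K11 = PGdel src tgt i := by
    rw [hK11, ← Matrix.det_submatrix_equiv_self e M', hsub,
      Matrix.det_fromBlocks_zero₁₂, Matrix.det_one, one_mul]
    rfl
  exact this
end

section
/- For d = |E|+1,…,2|E|, the coefficient of λ^d in det(λ − T_G) equals ∑_{r=1}^{⌊d/2⌋} (−1)^{r+1} ∑_{i₁<…<i_r} [λ^{d−2r}] det(λ − T_{G−e_{i₁}−…−e_{i_r}}). -/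
/-- Connectedness of the multigraph. -/
def Gconn {m : ℕ} {V : Type} (src tgt : Fin m → V) : Prop :=
  ∀ a b : V, Relation.ReflTransGen
    (fun u v => ∃ e, (src e = u ∧ tgt e = v) ∨ (src e = v ∧ tgt e = u)) a b

/-- The characteristic polynomial `det(λ − T_G)` of the edge adjacency matrix. -/
noncomputable def charT {m : ℕ} {V : Type} [DecidableEq V] (src tgt : Fin m → V) :
    Polynomial ℝ :=
  Matrix.det (Matrix.of fun x y : Fin m × Bool =>
    (if x = y then Polynomial.X else 0) - Polynomial.C (bh ℝ src tgt x y))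

/-- The characteristic polynomial `det(λ − T_{G − e_{i₁} − … − e_{i_r}})` of the edge
adjacency matrix of the graph obtained by deleting the edges in `s`. -/
noncomputable def charTdel {m : ℕ} {V : Type} [DecidableEq V] (src tgt : Fin m → V)
    (s : Finset (Fin m)) : Polynomial ℝ :=
  Matrix.det (Matrix.of fun a b : {x : Fin m × Bool // x.1 ∉ s} =>
    (if a = b then Polynomial.X else 0) - Polynomial.C (bh ℝ src tgt a.1 b.1))

open Finset Polynomial

namespace Finset

theorem sum_Icc_one_neg_one_pow_succ_mul_choose {R : Type*} [CommRing R] {t D : ℕ}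
    (ht : t ≠ 0) (htD : t ≤ D) :
    ∑ r ∈ Icc 1 D, (-1 : R) ^ (r + 1) * t.choose r = 1 := by
  have hvanish : ∑ r ∈ range (D + 1), (-1 : R) ^ r * t.choose r = 0 := by
    rw [← sum_subset (range_subset_range.mpr (by omega : t + 1 ≤ D + 1)) fun r _ hr => by
      rw [Nat.choose_eq_zero_of_lt (by simpa using hr), Nat.cast_zero, mul_zero]]
    have := congrArg (Int.cast : ℤ → R) (Int.alternating_sum_range_choose_of_ne ht)
    push_cast at this
    exact this
  rw [range_eq_Ico, sum_eq_sum_Ico_succ_bot (Nat.succ_pos D)] at hvanish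
  simp only [Nat.succ_eq_add_one, zero_add, Ico_add_one_right_eq_Icc, pow_zero,
    Nat.choose_zero_right, Nat.cast_one, one_mul] at hvanish
  simp only [pow_succ, mul_neg_one, neg_mul, sum_neg_distrib]
  linear_combination -hvanish

theorem sum_powersetCard_sum_powersetCard_filter_notMem {ι κ M : Type*}
    [Fintype ι] [Fintype κ] [DecidableEq ι] [DecidableEq κ] [AddCommMonoid M]
    (π : ι → κ) (f : Finset ι → M) (r k : ℕ) :
    ∑ s ∈ (univ : Finset κ).powersetCard r,
        ∑ T ∈ (univ.filter fun x => π x ∉ s).powersetCard k, f T =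
      ∑ T ∈ (univ : Finset ι).powersetCard k,
        (Fintype.card κ - #(T.image π)).choose r • f T := by
  have havoid : ∀ s : Finset κ, (univ.filter fun x => π x ∉ s).powersetCard k =
      {T ∈ (univ : Finset ι).powersetCard k | Disjoint (T.image π) s} := by
    intro s
    ext T
    grind [disjoint_left]
  have hcount : ∀ T : Finset ι,
      {s ∈ (univ : Finset κ).powersetCard r | Disjoint (T.image π) s} =
        (T.image π)ᶜ.powersetCard r := by
    intro T
    ext s
    simp [mem_powersetCard, subset_compl_iff_disjoint_left, and_comm]
  simp_rw [havoid, sum_filter]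
  rw [sum_comm]
  refine sum_congr rfl fun T _ => ?_
  rw [← sum_filter, sum_const, hcount, card_powersetCard, card_compl]

theorem card_le_two_mul_card_image_fst {κ : Type*} [DecidableEq κ] (T : Finset (κ × Bool)) :
    #T ≤ 2 * #(T.image Prod.fst) :=
  calc #T ≤ #(T.image Prod.fst ×ˢ (univ : Finset Bool)) :=
        card_le_card fun x hx => mem_product.mpr ⟨mem_image_of_mem _ hx, mem_univ _⟩
    _ = 2 * #(T.image Prod.fst) := by rw [card_product, card_univ, Fintype.card_bool, mul_comm]

end Finset

theorem Fintype.card_prod_bool_subtype_fst_notMem {κ : Type*} [Fintype κ] [DecidableEq κ]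
    (s : Finset κ) : Fintype.card {x : κ × Bool // x.1 ∉ s} = 2 * (Fintype.card κ - #s) := by
  rw [Fintype.card_congr (Equiv.prodSubtypeFstEquivSubtypeProd (p := (· ∉ s))),
    Fintype.card_prod, Fintype.card_bool, Fintype.card_subtype_compl, Fintype.card_coe, mul_comm]

namespace Matrix

theorem det_ite_X_sub_C_eq_charpoly {ι R : Type*} [Fintype ι] [DecidableEq ι] [CommRing R]
    (A : Matrix ι ι R) :
    (Matrix.of fun x y => (if x = y then X else 0) - C (A x y)).det = A.charpoly :=
  rfl

theorem charpoly_submatrix_subtype_coeff_eq_sum_minors {ι R : Type*} [Fintype ι] [DecidableEq ι]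
    [CommRing R] (A : Matrix ι ι R) (p : ι → Prop) [DecidablePred p] {n k : ℕ}
    (hcard : Fintype.card {x // p x} = n + k) :
    (A.submatrix (Subtype.val : {x // p x} → ι) Subtype.val).charpoly.coeff n =
      (-1) ^ k * ∑ T ∈ (univ.filter p).powersetCard k,
        (A.submatrix (Subtype.val : T → ι) Subtype.val).det := by
  rw [show n = Fintype.card {x // p x} - k by omega,
    charpoly_coeff_eq_sum_minors _ k (by omega), ← univ_map_subtype, powersetCard_map, sum_map]
  congr 1
  refine sum_congr rfl fun T _ => ?_
  exact det_submatrix_equiv_self (T.equivMap (Function.Embedding.subtype p))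
    (A.submatrix (Subtype.val : T.map (Function.Embedding.subtype p) → ι) Subtype.val)

theorem charpoly_coeff_eq_sum_charpoly_coeff_deleteEdges {κ R : Type*} [Fintype κ]
    [DecidableEq κ] [CommRing R] (A : Matrix (κ × Bool) (κ × Bool) R) {d : ℕ}
    (hd1 : Fintype.card κ < d) (hd2 : d ≤ 2 * Fintype.card κ) :
    A.charpoly.coeff d =
      ∑ r ∈ Icc 1 (d / 2), (-1) ^ (r + 1) * ∑ s ∈ (univ : Finset κ).powersetCard r,
        (A.submatrix (Subtype.val : {x : κ × Bool // x.1 ∉ s} → κ × Bool)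
          Subtype.val).charpoly.coeff (d - 2 * r) := by
  set k := 2 * Fintype.card κ - d
  set minor : Finset (κ × Bool) → R := fun T =>
    (A.submatrix (Subtype.val : T → κ × Bool) Subtype.val).det
  have hcard : Fintype.card (κ × Bool) = d + k := by
    rw [Fintype.card_prod, Fintype.card_bool]
    omega
  have hdel : ∀ r ∈ Icc 1 (d / 2), ∀ s ∈ (univ : Finset κ).powersetCard r,
      (A.submatrix (Subtype.val : {x : κ × Bool // x.1 ∉ s} → κ × Bool)
          Subtype.val).charpoly.coeff (d - 2 * r) =
        (-1) ^ k * ∑ T ∈ (univ.filter fun x => x.1 ∉ s).powersetCard k, minor T := by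
    intro r hr s hs
    rw [mem_Icc] at hr
    rw [mem_powersetCard_univ] at hs
    refine charpoly_submatrix_subtype_coeff_eq_sum_minors A _ ?_
    rw [Fintype.card_prod_bool_subtype_fst_notMem, hs]
    omega
  have hweight : ∀ T ∈ (univ : Finset (κ × Bool)).powersetCard k,
      ∑ r ∈ Icc 1 (d / 2), (-1 : R) ^ (r + 1) *
        (Fintype.card κ - #(T.image Prod.fst)).choose r = 1 := by
    intro T hT
    rw [mem_powersetCard_univ] at hT
    have := card_image_le (s := T) (f := Prod.fst)
    have := T.card_le_two_mul_card_image_fst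
    exact sum_Icc_one_neg_one_pow_succ_mul_choose (by omega) (by omega)
  calc A.charpoly.coeff d
      = (-1) ^ k * ∑ T ∈ (univ : Finset (κ × Bool)).powersetCard k, minor T := by
        rw [show d = Fintype.card (κ × Bool) - k by omega,
          charpoly_coeff_eq_sum_minors _ _ (by omega)]
    _ = ∑ r ∈ Icc 1 (d / 2), (-1) ^ (r + 1) *
          ((-1) ^ k * ∑ T ∈ (univ : Finset (κ × Bool)).powersetCard k,
            (Fintype.card κ - #(T.image Prod.fst)).choose r • minor T) := by
        simp_rw [nsmul_eq_mul, mul_left_comm _ ((-1 : R) ^ k), ← mul_sum]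
        congr 1
        simp_rw [mul_sum, ← mul_assoc]
        rw [sum_comm]
        exact sum_congr rfl fun T hT => by rw [← sum_mul, hweight T hT, one_mul]
    _ = _ := by
        refine sum_congr rfl fun r hr => ?_
        rw [sum_congr rfl (hdel r hr), ← mul_sum, sum_powersetCard_sum_powersetCard_filter_notMem]

end Matrix

theorem stmt3_general (m : ℕ) (V : Type) [DecidableEq V]
    (src tgt : Fin m → V)
    (d : ℕ) (hd1 : m < d) (hd2 : d ≤ 2 * m) :
    (charT src tgt).coeff d =
      ∑ r ∈ Finset.Icc 1 (d / 2), (-1 : ℝ) ^ (r + 1) *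
        ∑ s ∈ (Finset.univ : Finset (Fin m)).powersetCard r,
          (charTdel src tgt s).coeff (d - 2 * r) := by
  simp only [charT, charTdel, Matrix.det_ite_X_sub_C_eq_charpoly]
  exact (bh ℝ src tgt).charpoly_coeff_eq_sum_charpoly_coeff_deleteEdges
    (by simpa using hd1) (by simpa using hd2)

/-- for `d = |E|+1, …, 2|E|`,
`[λ^d] det(λ − T_G) = ∑_{r=1}^{⌊d/2⌋} (−1)^{r+1} ∑_{i₁<…<i_r}
  [λ^{d−2r}] det(λ − T_{G−e_{i₁}−…−e_{i_r}})`. -/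
theorem stmt3 (m : ℕ) (V : Type) [Fintype V] [DecidableEq V]
    (src tgt : Fin m → V) (hconn : Gconn src tgt)
    (d : ℕ) (hd1 : m < d) (hd2 : d ≤ 2 * m) :
    (charT src tgt).coeff d =
      ∑ r ∈ Finset.Icc 1 (d / 2), (-1 : ℝ) ^ (r + 1) *
        ∑ s ∈ (Finset.univ : Finset (Fin m)).powersetCard r,
          (charTdel src tgt s).coeff (d - 2 * r) :=
  stmt3_general m V src tgt d hd1 hd2
end

section
/- Let G be a finite multigraph with first Betti number b₁ > 1 and T its edge adjacency matrix. The linear map φ : H₁(G,ℂ) → ker(1 − T) sending a cycle ∑_{e∈I} e to ∑_{e∈I} (e⃗ − e⃖) is well-defined (its image consists of eigenvectors of T with eigenvalue 1) and injective. -/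
open Matrix

/-- The boundary map `∂ : ℂ^E → ℂ^V`; the cycle space `H₁(G,ℂ)` is its kernel. -/
noncomputable def bdry {m : ℕ} {V : Type} [Fintype V] [DecidableEq V] (src tgt : Fin m → V)
    (f : Fin m → ℂ) : V → ℂ :=
  fun v => ∑ e : Fin m, ((if tgt e = v then f e else 0) - (if src e = v then f e else 0))

/-- The map `φ` sending a cycle `∑_{e ∈ I} e` to `∑_{e ∈ I} (e⃗ − e⃖)`, extended linearly:
a coefficient function `f` on edges goes to the function on oriented edges taking value
`f e` on the positive orientation and `−f e` on the negative one. -/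
def phiMap {m : ℕ} (f : Fin m → ℂ) : (Fin m × Bool) → ℂ :=
  fun x => if x.2 then f x.1 else - f x.1

/-- if the first Betti number is `> 1` (for a connected graph, `|V| < |E|`),
the map `φ : H₁(G,ℂ) → ker(1 − T)`, `∑_{e∈I} e ↦ ∑_{e∈I} (e⃗ − e⃖)`, is well defined
(its values are eigenvectors of `T` of eigenvalue `1`) and injective. -/
theorem stmt9 (m : ℕ) (V : Type) [Fintype V] [DecidableEq V] (src tgt : Fin m → V)
    (hconn : Gconn src tgt) (hb : Fintype.card V < m) :
    (∀ f : Fin m → ℂ, bdry src tgt f = 0 →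
        Matrix.vecMul (phiMap f) (bh ℂ src tgt) = phiMap f) ∧
    (∀ f g : Fin m → ℂ, bdry src tgt f = 0 → bdry src tgt g = 0 →
        phiMap f = phiMap g → f = g) := by
  constructor
  · intro f hf
    funext y
    have hv : ∀ v, ∑ x : Fin m × Bool, (if termv src tgt x = v then phiMap f x else 0) = 0 := by
      intro v
      have h0 := congrFun hf v
      simp only [Pi.zero_apply] at h0
      have heq : (∑ x : Fin m × Bool, if termv src tgt x = v then phiMap f x else 0)
          = bdry src tgt f v := by
        rw [bdry, Fintype.sum_prod_type]
        apply Finset.sum_congr rfl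
        intro e _
        rw [Fintype.sum_bool]
        simp only [termv, phiMap]
        simp only [ite_true, ite_false]
        split_ifs <;> first | ring1 | (exfalso; assumption)
      rw [heq, h0]
    have hterm : termv src tgt (obar y) = orig src tgt y := by
      obtain ⟨e, b⟩ := y; cases b <;> simp [obar, termv, orig]
    have hphi : phiMap f (obar y) = - phiMap f y := by
      obtain ⟨e, b⟩ := y; cases b <;> simp [obar, phiMap]
    have key : ∀ x, phiMap f x * bh ℂ src tgt x y =
        (if termv src tgt x = orig src tgt y then phiMap f x else 0)
        - (if x = obar y then phiMap f x else 0) := by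
      intro x
      by_cases h1 : x = obar y
      · subst h1
        have : y = obar (obar y) := by simp [obar]
        simp [bh, hterm, ← this]
      · have h2 : y ≠ obar x := by
          intro h; apply h1; rw [h]; simp [obar]
        by_cases h3 : termv src tgt x = orig src tgt y
        · simp [bh, h3, h2, h1]
        · simp [bh, h3, h1]
    show ∑ x, phiMap f x * bh ℂ src tgt x y = phiMap f y
    rw [Finset.sum_congr rfl (fun x _ => key x), Finset.sum_sub_distrib, hv,
      Finset.sum_ite_eq' Finset.univ (obar y) (phiMap f)]
    simp [hphi]
  · intro f g _ _ h
    funext e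
    simpa [phiMap] using congrFun h (e, true)
end

section
/- Let G be a finite multigraph and c = e₁+…+e_r an induced cycle of even length r with proper 2-coloring κ(e_j) = (−1)^j. Then the vector ∑_j κ(e_j)(e⃗_j + e⃖_j) ∈ ℂ^{2|E|} is an eigenvector of the edge adjacency matrix T with eigenvalue −1. -/
open Matrix

/-- for an induced cycle `c = e₁ + … + e_r` of even length `r` with a proper
2-coloring `κ` (`κ(e_{j+1}) = −κ(e_j)`, `κ(e₀) = 1`), the vector
`∑_j κ(e_j)(e⃗_j + e⃖_j)` is an eigenvector of `T` with eigenvalue `−1`. -/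
theorem stmt10 (m : ℕ) (V : Type) [Fintype V] [DecidableEq V] (src tgt : Fin m → V)
    (r : ℕ) [NeZero r] (hr : 2 ∣ r)
    (ε : ZMod r → Fin m × Bool)
    (hcons : ∀ j, termv src tgt (ε j) = orig src tgt (ε (j + 1)))
    (hnb : ∀ j, ε (j + 1) ≠ obar (ε j))
    (hvinj : Function.Injective fun j => orig src tgt (ε j))
    (hinduced : ∀ f : Fin m × Bool,
      (∃ j, orig src tgt f = orig src tgt (ε j)) →
      (∃ k, termv src tgt f = orig src tgt (ε k)) →
      ∃ j, f = ε j ∨ f = obar (ε j))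
    (κ : ZMod r → ℂ) (hκ : ∀ j, κ (j + 1) = - κ j) (hκ0 : κ 0 = 1)
    (w : (Fin m × Bool) → ℂ)
    (hw : w = fun x => ∑ j : ZMod r,
      κ j * ((if x = ε j then 1 else 0) + (if x = obar (ε j) then 1 else 0))) :
    Matrix.vecMul w (bh ℂ src tgt) = -w ∧ w ≠ 0 := by
  -- basic facts about obar/orig/termv
  have hobar : ∀ x : Fin m × Bool, obar (obar x) = x := by
    intro x; simp [obar]
  have horig : ∀ x : Fin m × Bool, orig src tgt (obar x) = termv src tgt x := by
    rintro ⟨e, b⟩; cases b <;> simp [obar, orig, termv]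
  have hterm : ∀ x : Fin m × Bool, termv src tgt (obar x) = orig src tgt x := by
    rintro ⟨e, b⟩; cases b <;> simp [obar, orig, termv]
  have εinj : Function.Injective ε := fun a b h => hvinj (congrArg (orig src tgt) h)
  have fact2 : ∀ j j' : ZMod r, ε j ≠ obar (ε j') := by
    intro j j' h
    have h1 : orig src tgt (ε j) = orig src tgt (ε (j' + 1)) := by
      rw [h, horig, hcons]
    have h2 : j = j' + 1 := hvinj h1
    exact hnb j' (h2 ▸ h)
  have hκ' : ∀ k : ZMod r, κ k = - κ (k - 1) := by
    intro k
    have h := hκ (k - 1)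
    rw [sub_add_cancel] at h
    rw [h]
  have hr2 : 2 ≤ r := by
    have := NeZero.ne r
    omega
  have hone : (1 : ZMod r) ≠ 0 := by
    haveI : Fact (1 < r) := ⟨hr2⟩
    exact one_ne_zero
  have hkk : ∀ k : ZMod r, k - 1 ≠ k := by
    intro k h
    exact hone (sub_eq_self.mp h)
  -- entries of bh on cycle edges
  have hforms : ∀ j y, bh ℂ src tgt (ε j) y =
      (if orig src tgt (ε (j + 1)) = orig src tgt y ∧ y ≠ obar (ε j) then (1 : ℂ) else 0) := by
    intro j y; simp [bh, hcons j]
  have hforms2 : ∀ j y, bh ℂ src tgt (obar (ε j)) y =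
      (if orig src tgt (ε j) = orig src tgt y ∧ y ≠ ε j then (1 : ℂ) else 0) := by
    intro j y; simp [bh, hterm, hobar]
  -- value of w on cycle edges
  have hwval1 : ∀ k : ZMod r, w (ε k) = κ k := by
    intro k
    rw [hw]
    have : ∀ j : ZMod r, κ j * ((if ε k = ε j then (1:ℂ) else 0) + (if ε k = obar (ε j) then 1 else 0))
        = if j = k then κ j else 0 := by
      intro j
      by_cases h : j = k
      · subst h; simp [fact2]
      · have h1 : ε k ≠ ε j := fun hh => h (εinj hh).symm
        simp [h, h1, fact2]
    simp only [this, Finset.sum_ite_eq', Finset.mem_univ, if_true]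
  have hwval2 : ∀ k : ZMod r, w (obar (ε k)) = κ k := by
    intro k
    rw [hw]
    have : ∀ j : ZMod r, κ j * ((if obar (ε k) = ε j then (1:ℂ) else 0) + (if obar (ε k) = obar (ε j) then 1 else 0))
        = if j = k then κ j else 0 := by
      intro j
      by_cases h : j = k
      · subst h
        have h2 : obar (ε j) ≠ ε j := fun hh => fact2 j j hh.symm
        simp [h2]
      · have h1 : obar (ε k) ≠ ε j := fun hh => fact2 j k hh.symm
        have h2 : obar (ε k) ≠ obar (ε j) := by
          intro hh
          exact h (εinj (by rw [← hobar (ε k), hh, hobar])).symm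
        simp [h1, h2, h]
    simp only [this, Finset.sum_ite_eq', Finset.mem_univ, if_true]
  have hwval0 : ∀ y : Fin m × Bool, (∀ j, y ≠ ε j) → (∀ j, y ≠ obar (ε j)) → w y = 0 := by
    intro y h1 h2
    rw [hw]
    apply Finset.sum_eq_zero
    intro j _
    simp [h1 j, h2 j]
  refine ⟨?_, ?_⟩
  · funext y
    have key : Matrix.vecMul w (bh ℂ src tgt) y =
        ∑ j : ZMod r, κ j * (bh ℂ src tgt (ε j) y + bh ℂ src tgt (obar (ε j)) y) := by
      rw [hw]
      simp only [Matrix.vecMul, dotProduct, Finset.sum_mul]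
      rw [Finset.sum_comm]
      refine Finset.sum_congr rfl fun j _ => ?_
      simp only [add_mul, mul_add, ite_mul, one_mul, zero_mul, mul_ite, mul_one, mul_zero,
        Finset.sum_add_distrib, Finset.sum_ite_eq', Finset.mem_univ, if_true]
    rw [key]
    by_cases hy : ∃ k, orig src tgt y = orig src tgt (ε k)
    · obtain ⟨k, hk⟩ := hy
      have c1 : ∀ j : ZMod r, orig src tgt (ε (j + 1)) = orig src tgt y → j = k - 1 := by
        intro j h
        have h2 : j + 1 = k := hvinj (h.trans hk)
        exact eq_sub_of_add_eq h2
      have c2 : ∀ j : ZMod r, orig src tgt (ε j) = orig src tgt y → j = k := by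
        intro j h
        exact hvinj (h.trans hk)
      have vanish : ∀ x ∈ Finset.univ, x ∉ ({k - 1, k} : Finset (ZMod r)) →
          κ x * (bh ℂ src tgt (ε x) y + bh ℂ src tgt (obar (ε x)) y) = 0 := by
        intro x _ hx
        simp only [Finset.mem_insert, Finset.mem_singleton, not_or] at hx
        rw [hforms, hforms2, if_neg (fun h => hx.1 (c1 x h.1)),
          if_neg (fun h => hx.2 (c2 x h.1))]
        ring
      rw [← Finset.sum_subset (Finset.subset_univ ({k - 1, k} : Finset (ZMod r))) vanish,
        Finset.sum_pair (hkk k)]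
      have hck : orig src tgt (ε (k - 1 + 1)) = orig src tgt y := by
        rw [sub_add_cancel, ← hk]
      by_cases hy1 : y = ε k
      · subst hy1
        have e1 : bh ℂ src tgt (ε (k - 1)) (ε k) = 1 := by
          rw [hforms, if_pos]
          exact ⟨hck, fact2 k (k - 1)⟩
        have e2 : bh ℂ src tgt (obar (ε (k - 1))) (ε k) = 0 := by
          rw [hforms2, if_neg]
          rintro ⟨h, -⟩; exact hkk k (c2 _ h)
        have e3 : bh ℂ src tgt (ε k) (ε k) = 0 := by
          rw [hforms, if_neg]
          rintro ⟨h, -⟩; exact hkk k (c1 k h).symm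
        have e4 : bh ℂ src tgt (obar (ε k)) (ε k) = 0 := by
          rw [hforms2, if_neg]
          rintro ⟨-, h⟩; exact h rfl
        rw [e1, e2, e3, e4, Pi.neg_apply, hwval1, hκ' k]
        ring
      · by_cases hy2 : y = obar (ε (k - 1))
        · subst hy2
          have e1 : bh ℂ src tgt (ε (k - 1)) (obar (ε (k - 1))) = 0 := by
            rw [hforms, if_neg]
            rintro ⟨-, h⟩; exact h rfl
          have e2 : bh ℂ src tgt (obar (ε (k - 1))) (obar (ε (k - 1))) = 0 := by
            rw [hforms2, if_neg]
            rintro ⟨h, -⟩; exact hkk k (c2 _ h)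
          have e3 : bh ℂ src tgt (ε k) (obar (ε (k - 1))) = 0 := by
            rw [hforms, if_neg]
            rintro ⟨h, -⟩
            have := c1 k h
            exact hkk k this.symm
          have e4 : bh ℂ src tgt (obar (ε k)) (obar (ε (k - 1))) = 1 := by
            rw [hforms2, if_pos]
            refine ⟨?_, fun h => fact2 k (k - 1) h.symm⟩
            rw [horig, hcons, sub_add_cancel]
          rw [e1, e2, e3, e4, Pi.neg_apply, hwval2, hκ' k]
          ring
        · have hne1 : ∀ j, y ≠ ε j := by
            intro j h
            have : orig src tgt (ε j) = orig src tgt y := by rw [h]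
            exact hy1 (h.trans (congrArg ε (c2 j this)))
          have hne2 : ∀ j, y ≠ obar (ε j) := by
            intro j h
            have h1 : orig src tgt (ε (j + 1)) = orig src tgt y := by
              rw [h, horig, hcons]
            have := c1 j h1
            exact hy2 (h.trans (congrArg (fun t => obar (ε t)) this))
          have e1 : bh ℂ src tgt (ε (k - 1)) y = 1 := by
            rw [hforms, if_pos]
            exact ⟨hck, hne2 (k - 1)⟩
          have e2 : bh ℂ src tgt (obar (ε (k - 1))) y = 0 := by
            rw [hforms2, if_neg]
            rintro ⟨h, -⟩; exact hkk k (c2 _ h)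
          have e3 : bh ℂ src tgt (ε k) y = 0 := by
            rw [hforms, if_neg]
            rintro ⟨h, -⟩; exact hkk k (c1 k h).symm
          have e4 : bh ℂ src tgt (obar (ε k)) y = 1 := by
            rw [hforms2, if_pos]
            exact ⟨hk.symm, hne1 k⟩
          rw [e1, e2, e3, e4, Pi.neg_apply, hwval0 y hne1 hne2, hκ' k]
          ring
    · push_neg at hy
      have hsum : ∑ j : ZMod r, κ j * (bh ℂ src tgt (ε j) y + bh ℂ src tgt (obar (ε j)) y) = 0 := by
        apply Finset.sum_eq_zero
        intro j _
        rw [hforms, hforms2, if_neg (fun h => hy (j + 1) h.1.symm),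
          if_neg (fun h => hy j h.1.symm)]
        ring
      have hne1 : ∀ j, y ≠ ε j := by
        intro j h
        exact hy j (by rw [h])
      have hne2 : ∀ j, y ≠ obar (ε j) := by
        intro j h
        exact hy (j + 1) (by rw [h, horig, hcons])
      rw [hsum, Pi.neg_apply, hwval0 y hne1 hne2, neg_zero]
  · intro h0
    have := hwval1 0
    rw [h0, hκ0] at this
    exact one_ne_zero this.symm
end
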